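/- Let S and A be nonempty finite sets, H a positive integer, P_h : S × A → PMF(S) transitions, r_h : S × A → [0,1] rewards, and let V⋆_h denote the optimal value functions (V⋆_{H+1} = 0, Q⋆_h(s,a) = r_h(s,a) + (P_h V⋆_{h+1})(s,a), V⋆_h(s) = max_a Q⋆_h(s,a)). Fix ε ∈ (0,1) and T ≥ 1. For each t ∈ {1,…,T}: let Q^t_h : S × A → [0,H] be arbitrary with V^t_h(s) = max_{a} Q^t_h(s,a) and V^t_{H+1} = 0; let π^t be a greedy policy with respect to Q^t (π^t_h(s) ∈ argmax_a Q^t_h(s,a)); let π'^t be an arbitrary policy and define the episode-level ε-greedy value V^{π̃^t}_1 = (1−ε) V^{π^t}_1 + ε V^{π'^t}_1; let Γ^t_h = r_h + P_h V^t_{h+1} − Q^t_h; let (s^t_1, a^t_1, …, s^t_H, a^t_H, s^t_{H+1}) be an arbitrary trajectory; and let ζ¹_{t,h} = [V^t_h(s^t_h) − V^{π^t}_h(s^t_h)] − [Q^t_h(s^t_h,a^t_h) − Q^{π^t}_h(s^t_h,a^t_h)], ζ²_{t,h} = [(P_h V^t_{h+1})(s^t_h,a^t_h) − (P_h V^{π^t}_{h+1})(s^t_h,a^t_h)]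 − [V^t_{h+1}(s^t_{h+1}) − V^{π^t}_{h+1}(s^t_{h+1})]. Then Σ_{t=1}^T ( V⋆_1(s^t_1) − V^{π̃^t}_1(s^t_1) ) ≤ Σ_{t=1}^T Σ_{h=1}^H ( E_{π⋆}[ Γ^t_h(s_h, a_h) | s_1 = s^t_1 ] − Γ^t_h(s^t_h, a^t_h) ) + Σ_{t=1}^T Σ_{h=1}^H ( ζ¹_{t,h} + ζ²_{t,h} ) + ε H T, where π⋆ is an optimal (greedy with respect to Q⋆) policy and E_{π⋆}[·|s_1=s] is the expectation along the trajectory generated by π⋆ from s. -/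

import Mathlib

open Finset

/-- The distribution of the state `s_{k+1}` after `k` transitions, starting from
`s₁`, when actions are chosen by the deterministic policy `π` and states evolve
according to the transition probabilities `P` (probability mass functions on the
finite sets are represented as nonnegative functions summing to one). -/
noncomputable def stateDistDet {S A : Type*} [Fintype S] [DecidableEq S]
    (P : ℕ → S → A → S → ℝ) (π : ℕ → S → A) (s₁ : S) : ℕ → S → ℝ
  | 0 => fun s => if s = s₁ then 1 else 0
  | k + 1 => fun s => ∑ s' : S,
      stateDistDet P π s₁ k s' * P (k + 1) s' (π (k + 1) s') s

/-- The temporal-difference error `Γ_h = r_h + P_h V_{h+1} − Q_h` of the estimates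
`(Q, V)` in a finite MDP. -/
noncomputable def tdErr {S A : Type*} [Fintype S]
    (P : ℕ → S → A → S → ℝ) (r : ℕ → S → A → ℝ)
    (V : ℕ → S → ℝ) (Q : ℕ → S → A → ℝ) (h : ℕ) (s : S) (a : A) : ℝ :=
  r h s a + (∑ s' : S, P h s a s' * V (h + 1) s') - Q h s a

private lemma sum_Icc_one_telescope' (f : ℕ → ℝ) (H : ℕ) :
    ∑ h ∈ Finset.Icc 1 H, (f h - f (h + 1)) = f 1 - f (H + 1) := by
  induction H with
  | zero => simp
  | succ n ih =>
    rw [Finset.sum_Icc_succ_top (by omega), ih]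
    ring

/-- Regret decomposition for value iteration under ε-greedy
exploration: the cumulative regret of the episode-level ε-greedy policies
`V^{π̃^t}_1 = (1−ε)V^{π^t}_1 + ε V^{π'^t}_1` against the optimal values `V⋆` is
bounded by the temporal-difference error terms (in expectation under the optimal
policy `π⋆` minus on-trajectory), the martingale terms `ζ¹, ζ²`, and `εHT`. -/
theorem regret_decomposition_eps_greedy
    {S A : Type*} [Fintype S] [Fintype A] [Nonempty S] [Nonempty A] [DecidableEq S]
    (H T : ℕ) (hH : 1 ≤ H) (hT : 1 ≤ T)
    (ε : ℝ) (hε : ε ∈ Set.Ioo (0 : ℝ) 1)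
    (P : ℕ → S → A → S → ℝ)
    (hP : ∀ h ∈ Finset.Icc 1 H, ∀ s a,
      (∀ s', 0 ≤ P h s a s') ∧ ∑ s', P h s a s' = 1)
    (r : ℕ → S → A → ℝ)
    (hr : ∀ h ∈ Finset.Icc 1 H, ∀ s a, r h s a ∈ Set.Icc (0 : ℝ) 1)
    -- optimal value functions `Q⋆, V⋆` (Bellman optimality equations)
    (Qstar : ℕ → S → A → ℝ) (Vstar : ℕ → S → ℝ)
    (hVstartop : Vstar (H + 1) = 0)
    (hQstar : ∀ h ∈ Finset.Icc 1 H, ∀ s a,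
      Qstar h s a = r h s a + ∑ s', P h s a s' * Vstar (h + 1) s')
    (hVstar : ∀ h ∈ Finset.Icc 1 H, ∀ s, Vstar h s = ⨆ a, Qstar h s a)
    -- optimal policy: greedy with respect to `Q⋆`
    (πstar : ℕ → S → A)
    (hπstar : ∀ h ∈ Finset.Icc 1 H, ∀ s a, Qstar h s a ≤ Qstar h s (πstar h s))
    -- estimated Q-functions with values in `[0,H]`, and `V^t_h = max_a Q^t_h(·,a)`
    (Q : ℕ → ℕ → S → A → ℝ) (V : ℕ → ℕ → S → ℝ)
    (hQrange : ∀ t ∈ Finset.Icc 1 T, ∀ h ∈ Finset.Icc 1 H, ∀ s a,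
      Q t h s a ∈ Set.Icc (0 : ℝ) (H : ℝ))
    (hVtop : ∀ t ∈ Finset.Icc 1 T, V t (H + 1) = 0)
    (hV : ∀ t ∈ Finset.Icc 1 T, ∀ h ∈ Finset.Icc 1 H, ∀ s,
      V t h s = ⨆ a, Q t h s a)
    -- greedy policies `π^t` with respect to `Q^t`, and their value functions
    (πg : ℕ → ℕ → S → A)
    (hπg : ∀ t ∈ Finset.Icc 1 T, ∀ h ∈ Finset.Icc 1 H, ∀ s a,
      Q t h s a ≤ Q t h s (πg t h s))
    (Qpi : ℕ → ℕ → S → A → ℝ) (Vpi : ℕ → ℕ → S → ℝ)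
    (hVpitop : ∀ t ∈ Finset.Icc 1 T, Vpi t (H + 1) = 0)
    (hQpi : ∀ t ∈ Finset.Icc 1 T, ∀ h ∈ Finset.Icc 1 H, ∀ s a,
      Qpi t h s a = r h s a + ∑ s', P h s a s' * Vpi t (h + 1) s')
    (hVpi : ∀ t ∈ Finset.Icc 1 T, ∀ h ∈ Finset.Icc 1 H, ∀ s,
      Vpi t h s = Qpi t h s (πg t h s))
    -- arbitrary stochastic policies `π'^t` and their value functions
    (πpr : ℕ → ℕ → S → A → ℝ)
    (hπpr : ∀ t ∈ Finset.Icc 1 T, ∀ h ∈ Finset.Icc 1 H, ∀ s,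
      (∀ a, 0 ≤ πpr t h s a) ∧ ∑ a, πpr t h s a = 1)
    (Qpr : ℕ → ℕ → S → A → ℝ) (Vpr : ℕ → ℕ → S → ℝ)
    (hVprtop : ∀ t ∈ Finset.Icc 1 T, Vpr t (H + 1) = 0)
    (hQpr : ∀ t ∈ Finset.Icc 1 T, ∀ h ∈ Finset.Icc 1 H, ∀ s a,
      Qpr t h s a = r h s a + ∑ s', P h s a s' * Vpr t (h + 1) s')
    (hVpr : ∀ t ∈ Finset.Icc 1 T, ∀ h ∈ Finset.Icc 1 H, ∀ s,
      Vpr t h s = ∑ a, πpr t h s a * Qpr t h s a)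
    -- arbitrary trajectories
    (s : ℕ → ℕ → S) (a : ℕ → ℕ → A) :
    ∑ t ∈ Finset.Icc 1 T,
        (Vstar 1 (s t 1) - ((1 - ε) * Vpi t 1 (s t 1) + ε * Vpr t 1 (s t 1)))
      ≤ (∑ t ∈ Finset.Icc 1 T, ∑ h ∈ Finset.Icc 1 H,
            ((∑ s' : S, stateDistDet P πstar (s t 1) (h - 1) s'
                * tdErr P r (V t) (Q t) h s' (πstar h s'))
              - tdErr P r (V t) (Q t) h (s t h) (a t h)))
        + (∑ t ∈ Finset.Icc 1 T, ∑ h ∈ Finset.Icc 1 H,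
            (((V t h (s t h) - Vpi t h (s t h))
                - (Q t h (s t h) (a t h) - Qpi t h (s t h) (a t h)))
              + (((∑ s' : S, P h (s t h) (a t h) s' * V t (h + 1) s')
                    - (∑ s' : S, P h (s t h) (a t h) s' * Vpi t (h + 1) s'))
                  - (V t (h + 1) (s t (h + 1)) - Vpi t (h + 1) (s t (h + 1))))))
        + ε * H * T := by
  obtain ⟨hε0, hε1⟩ := hε
  have key : ∀ t ∈ Finset.Icc 1 T,
      Vstar 1 (s t 1) - ((1 - ε) * Vpi t 1 (s t 1) + ε * Vpr t 1 (s t 1))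
        ≤ (∑ h ∈ Finset.Icc 1 H,
              ((∑ s' : S, stateDistDet P πstar (s t 1) (h - 1) s'
                  * tdErr P r (V t) (Q t) h s' (πstar h s'))
                - tdErr P r (V t) (Q t) h (s t h) (a t h)))
          + (∑ h ∈ Finset.Icc 1 H,
              (((V t h (s t h) - Vpi t h (s t h))
                  - (Q t h (s t h) (a t h) - Qpi t h (s t h) (a t h)))
                + (((∑ s' : S, P h (s t h) (a t h) s' * V t (h + 1) s')
                      - (∑ s' : S, P h (s t h) (a t h) s' * Vpi t (h + 1) s'))
                    - (V t (h + 1) (s t (h + 1)) - Vpi t (h + 1) (s t (h + 1))))))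
          + ε * H := by
    intro t ht
    -- Step 1: bounds `Vpi ≤ H+1-h` and `0 ≤ Vpr` by downward induction
    have hbound : ∀ k, k ≤ H → ∀ s',
        Vpi t (H + 1 - k) s' ≤ (k : ℝ) ∧ 0 ≤ Vpr t (H + 1 - k) s' := by
      intro k
      induction k with
      | zero =>
        intro _ s'
        simp [hVpitop t ht, hVprtop t ht]
      | succ k ih =>
        intro hk s'
        have hk' : k ≤ H := by omega
        have hmem : H - k ∈ Finset.Icc 1 H := by
          simp only [Finset.mem_Icc]; omega
        have heq : H + 1 - (k + 1) = H - k := by omega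
        have heq2 : H - k + 1 = H + 1 - k := by omega
        rw [heq]
        constructor
        · rw [hVpi t ht _ hmem, hQpi t ht _ hmem]
          have hsum : ∑ s'', P (H - k) s' (πg t (H - k) s') s'' * Vpi t (H - k + 1) s''
              ≤ ∑ s'', P (H - k) s' (πg t (H - k) s') s'' * (k : ℝ) := by
            apply Finset.sum_le_sum
            intro x _
            exact mul_le_mul_of_nonneg_left (by rw [heq2]; exact (ih hk' x).1)
              ((hP _ hmem s' (πg t (H - k) s')).1 x)
          have hr1 := (hr _ hmem s' (πg t (H - k) s')).2
          have hPsum := (hP _ hmem s' (πg t (H - k) s')).2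
          rw [← Finset.sum_mul, hPsum, one_mul] at hsum
          push_cast
          linarith
        · rw [hVpr t ht _ hmem]
          apply Finset.sum_nonneg
          intro x _
          apply mul_nonneg ((hπpr t ht _ hmem s').1 x)
          rw [hQpr t ht _ hmem]
          have h0 : 0 ≤ ∑ s'', P (H - k) s' x s'' * Vpr t (H - k + 1) s'' := by
            apply Finset.sum_nonneg
            intro y _
            exact mul_nonneg ((hP _ hmem s' x).1 y) (by rw [heq2]; exact (ih hk' y).2)
          linarith [(hr _ hmem s' x).1]
    have h1H : H + 1 - H = 1 := by omega
    have hVpi1 : Vpi t 1 (s t 1) ≤ (H : ℝ) := by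
      have := (hbound H le_rfl (s t 1)).1
      rwa [h1H] at this
    have hVpr1 : 0 ≤ Vpr t 1 (s t 1) := by
      have := (hbound H le_rfl (s t 1)).2
      rwa [h1H] at this
    -- Step 2: the ζ-terms identity
    have hzeta : ∀ h ∈ Finset.Icc 1 H,
        (((V t h (s t h) - Vpi t h (s t h))
            - (Q t h (s t h) (a t h) - Qpi t h (s t h) (a t h)))
          + (((∑ s' : S, P h (s t h) (a t h) s' * V t (h + 1) s')
                - (∑ s' : S, P h (s t h) (a t h) s' * Vpi t (h + 1) s'))
              - (V t (h + 1) (s t (h + 1)) - Vpi t (h + 1) (s t (h + 1)))))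
        = tdErr P r (V t) (Q t) h (s t h) (a t h)
          + ((V t h (s t h) - Vpi t h (s t h))
              - (V t (h + 1) (s t (h + 1)) - Vpi t (h + 1) (s t (h + 1)))) := by
      intro h hh
      simp only [tdErr, hQpi t ht h hh]
      ring
    have tele1 : ∑ h ∈ Finset.Icc 1 H,
        ((V t h (s t h) - Vpi t h (s t h))
          - (V t (h + 1) (s t (h + 1)) - Vpi t (h + 1) (s t (h + 1))))
        = (V t 1 (s t 1) - Vpi t 1 (s t 1))
          - (V t (H + 1) (s t (H + 1)) - Vpi t (H + 1) (s t (H + 1))) :=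
      sum_Icc_one_telescope' (fun h => V t h (s t h) - Vpi t h (s t h)) H
    have hzsum : ∑ h ∈ Finset.Icc 1 H,
        (((V t h (s t h) - Vpi t h (s t h))
            - (Q t h (s t h) (a t h) - Qpi t h (s t h) (a t h)))
          + (((∑ s' : S, P h (s t h) (a t h) s' * V t (h + 1) s')
                - (∑ s' : S, P h (s t h) (a t h) s' * Vpi t (h + 1) s'))
              - (V t (h + 1) (s t (h + 1)) - Vpi t (h + 1) (s t (h + 1)))))
        = (∑ h ∈ Finset.Icc 1 H, tdErr P r (V t) (Q t) h (s t h) (a t h))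
          + (V t 1 (s t 1) - Vpi t 1 (s t 1)) := by
      rw [Finset.sum_congr rfl hzeta, Finset.sum_add_distrib, tele1]
      simp [hVtop t ht, hVpitop t ht]
    -- Step 3: optimality gap
    have dnn : ∀ k, k ≤ H → ∀ s', 0 ≤ stateDistDet P πstar (s t 1) k s' := by
      intro k
      induction k with
      | zero =>
        intro _ s'
        simp only [stateDistDet]
        split <;> norm_num
      | succ k ih =>
        intro hk s'
        simp only [stateDistDet]
        apply Finset.sum_nonneg
        intro x _
        exact mul_nonneg (ih (by omega) x)
          ((hP (k + 1) (by simp only [Finset.mem_Icc]; omega) x (πstar (k + 1) x)).1 s')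
    have hGapp : ∀ h : ℕ, True := fun _ => trivial
    set G : ℕ → ℝ := fun h => ∑ s' : S,
        stateDistDet P πstar (s t 1) (h - 1) s' * (Vstar h s' - V t h s') with hGdef
    have hGeq : ∀ h : ℕ, G h = ∑ s' : S,
        stateDistDet P πstar (s t 1) (h - 1) s' * (Vstar h s' - V t h s') := fun _ => rfl
    have hstep : ∀ h ∈ Finset.Icc 1 H,
        G h - G (h + 1) ≤ ∑ s' : S, stateDistDet P πstar (s t 1) (h - 1) s'
            * tdErr P r (V t) (Q t) h s' (πstar h s') := by
      intro h hh
      have hhH : 1 ≤ h ∧ h ≤ H := Finset.mem_Icc.mp hh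
      obtain ⟨h', rfl⟩ : ∃ h', h = h' + 1 := ⟨h - 1, by omega⟩
      have hpt : ∀ s', Vstar (h' + 1) s' - V t (h' + 1) s'
          ≤ tdErr P r (V t) (Q t) (h' + 1) s' (πstar (h' + 1) s')
            + ∑ s'' : S, P (h' + 1) s' (πstar (h' + 1) s') s''
                * (Vstar (h' + 1 + 1) s'' - V t (h' + 1 + 1) s'') := by
        intro s'
        have h1 : Vstar (h' + 1) s' ≤ Qstar (h' + 1) s' (πstar (h' + 1) s') := by
          rw [hVstar _ hh s']
          exact ciSup_le (fun b => hπstar _ hh s' b)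
        have h2 : Q t (h' + 1) s' (πstar (h' + 1) s') ≤ V t (h' + 1) s' := by
          rw [hV t ht _ hh s']
          exact le_ciSup (Set.Finite.bddAbove (Set.finite_range _)) _
        have h3 : ∑ s'' : S, P (h' + 1) s' (πstar (h' + 1) s') s''
              * (Vstar (h' + 1 + 1) s'' - V t (h' + 1 + 1) s'')
            = (∑ s'' : S, P (h' + 1) s' (πstar (h' + 1) s') s'' * Vstar (h' + 1 + 1) s'')
              - ∑ s'' : S, P (h' + 1) s' (πstar (h' + 1) s') s'' * V t (h' + 1 + 1) s'' := by
          rw [← Finset.sum_sub_distrib]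
          exact Finset.sum_congr rfl (fun x _ => by ring)
        have h4 := hQstar _ hh s' (πstar (h' + 1) s')
        simp only [tdErr]
        rw [h3]
        linarith
      have hGle : G (h' + 1) ≤ (∑ s' : S, stateDistDet P πstar (s t 1) h' s'
            * tdErr P r (V t) (Q t) (h' + 1) s' (πstar (h' + 1) s'))
          + ∑ s' : S, stateDistDet P πstar (s t 1) h' s'
            * ∑ s'' : S, P (h' + 1) s' (πstar (h' + 1) s') s''
                * (Vstar (h' + 1 + 1) s'' - V t (h' + 1 + 1) s'') := by
        rw [hGeq, Nat.add_sub_cancel, ← Finset.sum_add_distrib]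
        apply Finset.sum_le_sum
        intro s' _
        rw [← mul_add]
        exact mul_le_mul_of_nonneg_left (hpt s') (dnn h' (by omega) s')
      have hswap : ∑ s' : S, stateDistDet P πstar (s t 1) h' s'
            * ∑ s'' : S, P (h' + 1) s' (πstar (h' + 1) s') s''
                * (Vstar (h' + 1 + 1) s'' - V t (h' + 1 + 1) s'')
          = G (h' + 1 + 1) := by
        rw [hGeq]
        simp only [Nat.add_sub_cancel, stateDistDet, Finset.sum_mul, Finset.mul_sum]
        rw [Finset.sum_comm]
        exact Finset.sum_congr rfl (fun s' _ => Finset.sum_congr rfl (fun s'' _ => by ring))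
      rw [hswap] at hGle
      simp only [Nat.add_sub_cancel]
      linarith
    have hopt : Vstar 1 (s t 1) - V t 1 (s t 1)
        ≤ ∑ h ∈ Finset.Icc 1 H, ∑ s' : S, stateDistDet P πstar (s t 1) (h - 1) s'
            * tdErr P r (V t) (Q t) h s' (πstar h s') := by
      have tele : ∑ h ∈ Finset.Icc 1 H, (G h - G (h + 1)) = G 1 - G (H + 1) :=
        sum_Icc_one_telescope' G H
      have hsum := Finset.sum_le_sum hstep
      have hG1 : G 1 = Vstar 1 (s t 1) - V t 1 (s t 1) := by
        rw [hGeq]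
        norm_num
        simp [stateDistDet]
      have hGH : G (H + 1) = 0 := by
        rw [hGeq]
        simp [Nat.add_sub_cancel, hVstartop, hVtop t ht]
      rw [tele, hG1, hGH] at hsum
      linarith
    -- combine
    have hA : ∑ h ∈ Finset.Icc 1 H,
        ((∑ s' : S, stateDistDet P πstar (s t 1) (h - 1) s'
            * tdErr P r (V t) (Q t) h s' (πstar h s'))
          - tdErr P r (V t) (Q t) h (s t h) (a t h))
        = (∑ h ∈ Finset.Icc 1 H, ∑ s' : S, stateDistDet P πstar (s t 1) (h - 1) s'
            * tdErr P r (V t) (Q t) h s' (πstar h s'))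
          - ∑ h ∈ Finset.Icc 1 H, tdErr P r (V t) (Q t) h (s t h) (a t h) :=
      Finset.sum_sub_distrib _ _
    have hεb : ε * (Vpi t 1 (s t 1) - Vpr t 1 (s t 1)) ≤ ε * (H : ℝ) :=
      mul_le_mul_of_nonneg_left (by linarith) hε0.le
    have hεb' : ε * Vpi t 1 (s t 1) - ε * Vpr t 1 (s t 1) ≤ ε * (H : ℝ) := by
      linarith [hεb]
    linarith [hopt, hεb', hA, hzsum]
  refine le_trans (Finset.sum_le_sum key) (le_of_eq ?_)
  rw [Finset.sum_add_distrib, Finset.sum_add_distrib, Finset.sum_const, Nat.card_Icc,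
    Nat.add_sub_cancel, nsmul_eq_mul]
  ring
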